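/- arXiv:2601.18128 — 2 statements merged into one kernel-verified Lean document; each statement's English description precedes it below -/
import Mathlib

section
/- Let Ω be a probability space, K, G natural numbers, z : Ω → (Fin K → ℝ) a random vector, f : Fin G → ((Fin K → ℝ) → ℝ) measurable functions, and ε : Fin G → Ω → ℝ noise variables; define features x_l := f_l ∘ z + ε_l and assume each x_l and each f_l ∘ z is square-integrable. Fix indices j ≠ j' and a real constant c ≠ 0 with f_j = c · f_{j'} (pointwise), and suppose that for every l ∉ {j, j'}, ε_j is independent of x_l and ε_{j'} is independent of x_l. Then for every l ∉ {j, j'}, Cov(x_j, x_l) = c · Cov(x_{j'}, x_l); i.e., the off-diagonal rows of the covariance matrix of the features indexed by j and j' are parallel. -/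
open MeasureTheory ProbabilityTheory

/-- The covariance of two real-valued random variables:
`Cov(U, V) = E[(U − E[U]) * (V − E[V])]`. -/
noncomputable def cov {Ω : Type*} [MeasurableSpace Ω] (P : Measure Ω) (U V : Ω → ℝ) : ℝ :=
  ∫ ω, (U ω - ∫ ω', U ω' ∂P) * (V ω - ∫ ω', V ω' ∂P) ∂P

section Covariance

variable {Ω : Type*} [MeasurableSpace Ω] {P : Measure Ω}

lemma cov_eq_covariance (U V : Ω → ℝ) : cov P U V = cov[U, V; P] := rfl

lemma covariance_add_indepFun_left [IsFiniteMeasure P] {X N Y : Ω → ℝ}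
    (hX : MemLp X 2 P) (hN : MemLp N 2 P) (hY : MemLp Y 2 P) (hNY : IndepFun N Y P) :
    cov[X + N, Y; P] = cov[X, Y; P] := by
  rw [covariance_add_left hX hN hY, hNY.covariance_eq_zero hN hY, add_zero]

end Covariance

theorem anchor_rows_parallel_general {Ω : Type*} [MeasurableSpace Ω] (P : Measure Ω)
    [IsProbabilityMeasure P] (K G : ℕ)
    (z : Ω → (Fin K → ℝ)) (f : Fin G → ((Fin K → ℝ) → ℝ))
    (ε : Fin G → Ω → ℝ)
    (x : Fin G → Ω → ℝ) (hx : ∀ l, x l = fun ω => f l (z ω) + ε l ω)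
    (hxL2 : ∀ l, MemLp (x l) 2 P)
    (hfzL2 : ∀ l, MemLp (fun ω => f l (z ω)) 2 P)
    (j j' : Fin G) (c : ℝ)
    (hanchor : ∀ u : Fin K → ℝ, f j u = c * f j' u)
    (hindep : ∀ l, l ≠ j → l ≠ j' → IndepFun (ε j) (x l) P ∧ IndepFun (ε j') (x l) P) :
    ∀ l, l ≠ j → l ≠ j' → cov P (x j) (x l) = c * cov P (x j') (x l) := by
  intro l hlj hlj'
  obtain ⟨hindep_j, hindep_j'⟩ := hindep l hlj hlj'
  have hεL2 (m : Fin G) : MemLp (ε m) 2 P := by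
    have hε : ε m = x m - fun ω => f m (z ω) := by
      funext ω
      simp [hx m]
    exact hε ▸ (hxL2 m).sub (hfzL2 m)
  set g : Ω → ℝ := fun ω => f j' (z ω)
  have hxj : x j = c • g + ε j := by
    funext ω
    simp [hx j, hanchor, g]
  have hxj' : x j' = g + ε j' := hx j'
  rw [cov_eq_covariance, cov_eq_covariance, hxj, hxj',
    covariance_add_indepFun_left ((hfzL2 j').const_smul c) (hεL2 j) (hxL2 l) hindep_j,
    covariance_add_indepFun_left (hfzL2 j') (hεL2 j') (hxL2 l) hindep_j', covariance_smul_left]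

/-- Forward direction of the paper's Lemma 1: if `j` and `j'` are anchor features for the same
factor (i.e. `f j = c • f j'` with `c ≠ 0`), with noises independent of the other features,
then the corresponding off-diagonal rows of the covariance matrix are parallel:
`Cov(x_j, x_l) = c * Cov(x_{j'}, x_l)` for all `l ∉ {j, j'}`. -/
theorem anchor_rows_parallel {Ω : Type*} [MeasurableSpace Ω] (P : Measure Ω)
    [IsProbabilityMeasure P] (K G : ℕ)
    (z : Ω → (Fin K → ℝ)) (f : Fin G → ((Fin K → ℝ) → ℝ))
    (hf : ∀ l, Measurable (f l))
    (ε : Fin G → Ω → ℝ)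
    (x : Fin G → Ω → ℝ) (hx : ∀ l, x l = fun ω => f l (z ω) + ε l ω)
    (hxL2 : ∀ l, MemLp (x l) 2 P)
    (hfzL2 : ∀ l, MemLp (fun ω => f l (z ω)) 2 P)
    (j j' : Fin G) (hjj' : j ≠ j') (c : ℝ) (hc : c ≠ 0)
    (hanchor : ∀ u : Fin K → ℝ, f j u = c * f j' u)
    (hindep : ∀ l, l ≠ j → l ≠ j' → IndepFun (ε j) (x l) P ∧ IndepFun (ε j') (x l) P) :
    ∀ l, l ≠ j → l ≠ j' → cov P (x j) (x l) = c * cov P (x j') (x l) :=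
  anchor_rows_parallel_general P K G z f ε x hx hxL2 hfzL2 j j' c hanchor hindep
end

section
/- Let G, K₁, K₂ be natural numbers, A : Matrix (Fin G) (Fin K₁) ℝ and B : Matrix (Fin G) (Fin K₂) ℝ. Suppose that for every column index k : Fin K₁ there exists a row index r k : Fin G such that A (r k) k ≠ 0, A (r k) k' = 0 for every k' ≠ k, and B (r k) k'' = 0 for every k'' : Fin K₂. Then the column spaces of A and B intersect trivially: if w : Fin G → ℝ satisfies w = A.mulVec c for some c : Fin K₁ → ℝ and also w = B.mulVec d for some d : Fin K₂ → ℝ, then w = 0. -/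
/-! Evaluating `A *ᵥ c = B *ᵥ d` at an anchor row `r` of column `k` leaves `A r k * c k = 0`,
so every coefficient `c k` vanishes and the common vector is `A *ᵥ 0 = 0`. -/

open Matrix

namespace Matrix

variable {m n p α : Type*}

def IsAnchorRow [Zero α] (A : Matrix m n α) (B : Matrix m p α) (r : m) (k : n) : Prop :=
  A r k ≠ 0 ∧ (∀ k' : n, k' ≠ k → A r k' = 0) ∧ ∀ j : p, B r j = 0

namespace IsAnchorRow

variable {A : Matrix m n α} {B : Matrix m p α} {r : m} {k : n}

theorem mulVec_apply [Fintype n] [NonUnitalNonAssocSemiring α] (h : IsAnchorRow A B r k)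
    (c : n → α) : (A *ᵥ c) r = A r k * c k :=
  Finset.sum_eq_single k (fun k' _ hk' => by simp only [h.2.1 k' hk', zero_mul])
    fun hk => (hk (Finset.mem_univ k)).elim

theorem mulVec_apply_right [Fintype p] [NonUnitalNonAssocSemiring α] (h : IsAnchorRow A B r k)
    (d : p → α) : (B *ᵥ d) r = 0 :=
  Finset.sum_eq_zero fun j _ => by simp only [h.2.2 j, zero_mul]

theorem eq_zero_of_mulVec_eq [Fintype n] [Fintype p] [NonUnitalNonAssocSemiring α]
    [NoZeroDivisors α] (h : IsAnchorRow A B r k) {c : n → α} {d : p → α}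
    (hcd : A *ᵥ c = B *ᵥ d) : c k = 0 := by
  have hrow : A r k * c k = 0 := by
    rw [← h.mulVec_apply, hcd, h.mulVec_apply_right]
  exact (mul_eq_zero.mp hrow).resolve_left h.1

end IsAnchorRow

end Matrix

/-- If every column of `A` has an anchor row (a row where only that column of `A` is nonzero
and every entry of `B` is zero), then the column spaces of `A` and `B` intersect trivially. -/
theorem anchor_column_spaces_trivial_intersection (G K₁ K₂ : ℕ)
    (A : Matrix (Fin G) (Fin K₁) ℝ) (B : Matrix (Fin G) (Fin K₂) ℝ)
    (hanchor : ∀ k : Fin K₁, ∃ r : Fin G,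
      A r k ≠ 0 ∧ (∀ k' : Fin K₁, k' ≠ k → A r k' = 0) ∧ (∀ k'' : Fin K₂, B r k'' = 0))
    (w : Fin G → ℝ)
    (hA : ∃ c : Fin K₁ → ℝ, w = A.mulVec c)
    (hB : ∃ d : Fin K₂ → ℝ, w = B.mulVec d) :
    w = 0 := by
  obtain ⟨c, rfl⟩ := hA
  obtain ⟨d, hcd⟩ := hB
  have hc : c = 0 := funext fun k =>
    let ⟨_, hr⟩ := hanchor k
    IsAnchorRow.eq_zero_of_mulVec_eq (B := B) hr hcd
  rw [hc, mulVec_zero]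
end
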